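/- Let f : ℝⁿ → ℝᵈ be L-Lipschitz with L > 0, let μ : Fin m → ℝᵈ be centers with class labels c : Fin m → Fin L. Fix x and let i* minimize ‖f(x) − μ i‖ and j* minimize ‖f(x) − μ j‖ over j with c j ≠ c i*; assume ‖f(x) − μ i*‖ < ‖f(x) − μ j*‖ and μ i ≠ μ i* for all i with c i ≠ c i*. If ‖δ‖ < min over j with c j ≠ c i* of (‖f(x) − μ j‖² − ‖f(x) − μ i*‖²)/(2L‖μ j − μ i*‖), then for every j with c j ≠ c i*, ‖f(x+δ) − μ i*‖ < ‖f(x+δ) − μ j‖; hence the nearest center to f(x+δ) has class c i*. -/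

import Mathlib

/-! Moving from `a` to `z` changes the gap `‖· - q‖² - ‖· - p‖²` by `2⟪z - a, p - q⟫`, which
Cauchy–Schwarz bounds by `2‖z - a‖‖q - p‖`. So if `f` moves by at most `L‖δ‖` and the gap at `f x`
exceeds `2L‖δ‖‖q - p‖`, the center `p` stays strictly closer than `q`; applying this to every
center of another class gives the multi-class certificate. -/

open RealInnerProductSpace

section Certificate

variable {E : Type*} [NormedAddCommGroup E] [InnerProductSpace ℝ E]

theorem norm_sub_sq_sub_norm_sub_sq_eq (a z p q : E) :
    ‖z - q‖ ^ 2 - ‖z - p‖ ^ 2 = ‖a - q‖ ^ 2 - ‖a - p‖ ^ 2 + 2 * ⟪z - a, p - q⟫ := by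
  simp only [norm_sub_sq_real, inner_sub_left, inner_sub_right]
  ring

theorem norm_sub_lt_norm_sub_of_two_mul_lt {a z p q : E} {r : ℝ} (hz : ‖z - a‖ ≤ r)
    (hr : 2 * ‖q - p‖ * r < ‖a - q‖ ^ 2 - ‖a - p‖ ^ 2) : ‖z - p‖ < ‖z - q‖ := by
  have hinner : -(‖q - p‖ * r) ≤ ⟪z - a, p - q⟫ := by
    have hcs := neg_abs_le ⟪z - a, p - q⟫
    have hsz := abs_real_inner_le_norm (z - a) (p - q)
    rw [norm_sub_rev p] at hsz
    nlinarith [mul_le_mul_of_nonneg_left hz (norm_nonneg (q - p))]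
  refine lt_of_pow_lt_pow_left₀ 2 (norm_nonneg _) ?_
  linarith [norm_sub_sq_sub_norm_sub_sq_eq a z p q]

end Certificate

theorem mul_lt_of_lt_div_of_nonneg {t g D : ℝ} (ht : 0 ≤ t) (hD : 0 ≤ D) (h : t < g / D) :
    D * t < g := by
  rcases hD.eq_or_lt with rfl | hD
  · rw [div_zero] at h
    linarith
  · rwa [lt_div_iff₀ hD, mul_comm] at h

theorem clustr_multiclass_robustness_general
    {n d m L' : ℕ} (f : EuclideanSpace ℝ (Fin n) → EuclideanSpace ℝ (Fin d))
    (L : ℝ) (hL : 0 < L) (hf : ∀ x y, ‖f x - f y‖ ≤ L * ‖x - y‖)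
    (μ : Fin m → EuclideanSpace ℝ (Fin d)) (c : Fin m → Fin L')
    (x : EuclideanSpace ℝ (Fin n)) (istar : Fin m)
    (δ : EuclideanSpace ℝ (Fin n))
    (hδ : ∀ j, c j ≠ c istar →
      ‖δ‖ < (‖f x - μ j‖ ^ 2 - ‖f x - μ istar‖ ^ 2) / (2 * L * ‖μ j - μ istar‖)) :
    ∀ j, c j ≠ c istar → ‖f (x + δ) - μ istar‖ < ‖f (x + δ) - μ j‖ := by
  intro j hj
  have hmove : ‖f (x + δ) - f x‖ ≤ L * ‖δ‖ := by simpa using hf (x + δ) x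
  have hgap := mul_lt_of_lt_div_of_nonneg (norm_nonneg δ) (by positivity) (hδ j hj)
  exact norm_sub_lt_norm_sub_of_two_mul_lt hmove (by linarith)

theorem clustr_multiclass_robustness
    {n d m L' : ℕ} (f : EuclideanSpace ℝ (Fin n) → EuclideanSpace ℝ (Fin d))
    (L : ℝ) (hL : 0 < L) (hf : ∀ x y, ‖f x - f y‖ ≤ L * ‖x - y‖)
    (μ : Fin m → EuclideanSpace ℝ (Fin d)) (c : Fin m → Fin L')
    (x : EuclideanSpace ℝ (Fin n)) (istar jstar : Fin m)
    (histar : ∀ i, ‖f x - μ istar‖ ≤ ‖f x - μ i‖)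
    (hjc : c jstar ≠ c istar)
    (hjstar : ∀ j, c j ≠ c istar → ‖f x - μ jstar‖ ≤ ‖f x - μ j‖)
    (hx : ‖f x - μ istar‖ < ‖f x - μ jstar‖)
    (hne : ∀ i, c i ≠ c istar → μ i ≠ μ istar)
    (δ : EuclideanSpace ℝ (Fin n))
    (hδ : ∀ j, c j ≠ c istar →
      ‖δ‖ < (‖f x - μ j‖ ^ 2 - ‖f x - μ istar‖ ^ 2) / (2 * L * ‖μ j - μ istar‖)) :
    ∀ j, c j ≠ c istar → ‖f (x + δ) - μ istar‖ < ‖f (x + δ) - μ j‖ :=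
  clustr_multiclass_robustness_general f L hL hf μ c x istar δ hδ
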